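/- arXiv:math/0703242 — 2 statements merged into one kernel-verified Lean document; each statement's English description precedes it below -/
import Mathlib

section
/- Let τ be a zero of h_n with τ ≠ λ, let z₀ ∈ ℂ, and let T = dist(τ, supp μ). Then |z₀ − τ| ≥ T·|h_n(z₀)| / (K_{n-1}(z₀, z₀)^{1/2} · ‖h_n‖_{L²(dμ)}). -/
/-!
Since `h_n(τ) = 0`, `h_n = (X - τ) g` with `deg g < n`. Expanding `g` in `φ_0, …, φ_{n-1}`,
Parseval and Cauchy–Schwarz give the reproducing-kernel bound
`|g(z₀)| ≤ K_{n-1}(z₀, z₀)^{1/2} ‖g‖_{L²(μ)}`. On `supp μ`, which carries all of `μ`,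
`|z - τ| ≥ T`, so `T ‖g‖_{L²(μ)} ≤ ‖h_n‖_{L²(μ)}`. Multiplying `|h_n(z₀)| = |z₀ - τ| |g(z₀)|`
by `T` and combining the two bounds gives the claim.
-/

open MeasureTheory Polynomial

def msupport (μ : Measure ℂ) : Set ℂ := {z | ∀ ε > 0, μ (Metric.ball z ε) ≠ 0}

open ComplexConjugate

theorem Continuous.integrable_of_ae_mem_compact {α E : Type*} [TopologicalSpace α] [T2Space α]
    [MeasurableSpace α] [OpensMeasurableSpace α] [NormedAddCommGroup E]
    {μ : Measure α} [IsFiniteMeasure μ] {K : Set α} (hK : IsCompact K) (hμK : ∀ᵐ x ∂μ, x ∈ K)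
    {f : α → E} (hf : Continuous f) : Integrable f μ := by
  have := hf.continuousOn.integrableOn_compact (μ := μ) hK
  rwa [IntegrableOn, Measure.restrict_eq_self_of_ae_mem hμK] at this

theorem ae_mem_msupport (μ : Measure ℂ) : ∀ᵐ z ∂μ, z ∈ msupport μ := by
  rw [ae_iff]
  refine measure_null_of_locally_null _ fun x hx => ?_
  simp only [msupport, Set.mem_ofPred_eq, not_forall, not_not] at hx
  obtain ⟨ε, hε, hμ⟩ := hx
  exact ⟨Metric.ball x ε, Filter.mem_inf_of_left (Metric.ball_mem_nhds x hε), hμ⟩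

theorem infDist_msupport_mul_sqrt_integral_le (μ : Measure ℂ) (τ : ℂ) (g : ℂ → ℂ)
    (hint : Integrable (fun z => ‖(z - τ) * g z‖ ^ 2) μ) :
    Metric.infDist τ (msupport μ) * √(∫ z, ‖g z‖ ^ 2 ∂μ)
      ≤ √(∫ z, ‖(z - τ) * g z‖ ^ 2 ∂μ) := by
  rw [← Real.sqrt_sq Metric.infDist_nonneg, ← Real.sqrt_mul (sq_nonneg _), ← integral_const_mul]
  refine Real.sqrt_le_sqrt (integral_mono_of_nonneg (.of_forall fun z => by positivity) hint ?_)
  filter_upwards [ae_mem_msupport μ] with z hz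
  have hdist : Metric.infDist τ (msupport μ) ≤ ‖z - τ‖ := by
    simpa only [dist_eq_norm, norm_sub_rev τ] using Metric.infDist_le_dist_of_mem (x := τ) hz
  rw [norm_mul, mul_pow]
  exact mul_le_mul_of_nonneg_right (pow_le_pow_left₀ Metric.infDist_nonneg hdist 2) (by positivity)

section PolynomialSequence

variable {K : Type*} [Field K] {φ : ℕ → K[X]}

theorem degree_lt_of_X_sub_C_mul_eq {a : K} {g p q : K[X]} {n : ℕ}
    (h : (X - C a) * g = p * q) (hp : p.degree ≤ 1) (hq : q.degree < n) : g.degree < n := by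
  rcases eq_or_ne g 0 with rfl | hg
  · simp
  have hpq : p * q ≠ 0 := h ▸ mul_ne_zero (X_sub_C_ne_zero a) hg
  have hq0 := right_ne_zero_of_mul hpq
  have hdeg := congrArg natDegree h
  rw [natDegree_mul (X_sub_C_ne_zero a) hg, natDegree_mul (left_ne_zero_of_mul hpq) hq0,
    natDegree_X_sub_C] at hdeg
  have hp' := (natDegree_le_iff_degree_le (n := 1)).mpr hp
  rw [degree_eq_natDegree hq0, Nat.cast_lt] at hq
  rw [degree_eq_natDegree hg, Nat.cast_lt]
  omega

theorem degree_sum_mul_C_lt (hφdeg : ∀ j, (φ j).natDegree = j) (a : ℕ → K) (n : ℕ) :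
    (∑ j ∈ Finset.range n, φ j * C (a j)).degree < n := by
  refine mem_degreeLT.mp (Submodule.sum_mem _ fun j hj => ?_)
  rw [mul_comm, ← smul_eq_C_mul]
  refine Submodule.smul_mem _ _ (mem_degreeLT.mpr (degree_le_natDegree.trans_lt ?_))
  exact_mod_cast (hφdeg j).trans_lt (Finset.mem_range.mp hj)

theorem exists_eq_sum_C_mul_of_degree_lt (hφ0 : ∀ j, φ j ≠ 0)
    (hφdeg : ∀ j, (φ j).natDegree = j) {g : K[X]} {n : ℕ} (hg : g.degree < n) :
    ∃ c : ℕ → K, g = ∑ j ∈ Finset.range n, C (c j) * φ j := by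
  let S : Sequence K := ⟨φ, fun j => by rw [degree_eq_natDegree (hφ0 j), hφdeg j]⟩
  have hspan : Submodule.span K (φ '' ↑(Finset.range n)) = degreeLT K n := by
    rw [Finset.coe_range]
    exact S.span_degreeLT fun i _ => (leadingCoeff_ne_zero.mpr (hφ0 i)).isUnit
  obtain ⟨c, hc⟩ := (Submodule.mem_span_image_finset_iff_exists_fun' K).mp
    (hspan ▸ mem_degreeLT.mpr hg)
  exact ⟨c, by simp only [← hc, smul_eq_C_mul]⟩

end PolynomialSequence

section Orthonormal

variable {μ : Measure ℂ} {φ : ℕ → ℂ[X]}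

theorem ne_zero_of_orthonormal
    (hφon : ∀ i j, ∫ z, (φ i).eval z * conj ((φ j).eval z) ∂μ = if i = j then 1 else 0)
    (j : ℕ) : φ j ≠ 0 := by
  rintro h
  simpa [h] using hφon j j

variable [IsFiniteMeasure μ]

theorem integrable_of_ae_norm_eq_one (hcirc : ∀ᵐ z ∂μ, ‖z‖ = 1) {E : Type*}
    [NormedAddCommGroup E] {f : ℂ → E} (hf : Continuous f) : Integrable f μ :=
  hf.integrable_of_ae_mem_compact (isCompact_sphere 0 1) (by simpa using hcirc)

theorem integral_norm_sum_sq (hcirc : ∀ᵐ z ∂μ, ‖z‖ = 1)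
    (hφon : ∀ i j, ∫ z, (φ i).eval z * conj ((φ j).eval z) ∂μ = if i = j then 1 else 0)
    (s : Finset ℕ) (c : ℕ → ℂ) :
    ∫ z, ‖∑ j ∈ s, c j * (φ j).eval z‖ ^ 2 ∂μ = ∑ j ∈ s, ‖c j‖ ^ 2 := by
  have hint : ∀ i j, Integrable
      (fun z => c i * conj (c j) * ((φ i).eval z * conj ((φ j).eval z))) μ :=
    fun i j => integrable_of_ae_norm_eq_one hcirc (by fun_prop)
  have hexpand : ∀ z, (‖∑ j ∈ s, c j * (φ j).eval z‖ ^ 2 : ℂ) = ∑ i ∈ s, ∑ j ∈ s,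
      c i * conj (c j) * ((φ i).eval z * conj ((φ j).eval z)) := by
    intro z
    rw [← Complex.mul_conj', map_sum, Finset.sum_mul_sum]
    simp only [map_mul]
    exact Finset.sum_congr rfl fun i _ => Finset.sum_congr rfl fun j _ => by ring
  apply Complex.ofReal_injective
  rw [← integral_complex_ofReal]
  push_cast
  simp_rw [hexpand]
  rw [integral_finsetSum _ fun i _ => integrable_finsetSum _ fun j _ => hint i j]
  refine Finset.sum_congr rfl fun i hi => ?_
  rw [integral_finsetSum _ fun j _ => hint i j]
  simp_rw [integral_const_mul, hφon, mul_ite, mul_one, mul_zero, Finset.sum_ite_eq, if_pos hi,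
    Complex.mul_conj']

theorem norm_eval_le_sqrt_mul_sqrt_integral (hcirc : ∀ᵐ z ∂μ, ‖z‖ = 1)
    (hφon : ∀ i j, ∫ z, (φ i).eval z * conj ((φ j).eval z) ∂μ = if i = j then 1 else 0)
    (hφdeg : ∀ j, (φ j).natDegree = j) {g : ℂ[X]} {n : ℕ} (hg : g.degree < n) (z₀ : ℂ) :
    ‖g.eval z₀‖
      ≤ √(∑ j ∈ Finset.range n, ‖(φ j).eval z₀‖ ^ 2) * √(∫ z, ‖g.eval z‖ ^ 2 ∂μ) := by
  obtain ⟨c, rfl⟩ := exists_eq_sum_C_mul_of_degree_lt (ne_zero_of_orthonormal hφon) hφdeg hg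
  simp only [eval_finsetSum, eval_mul, eval_C]
  rw [integral_norm_sum_sq hcirc hφon]
  calc ‖∑ j ∈ Finset.range n, c j * (φ j).eval z₀‖
      ≤ ∑ j ∈ Finset.range n, ‖(φ j).eval z₀‖ * ‖c j‖ :=
        (norm_sum_le _ _).trans_eq (by simp only [norm_mul, mul_comm])
    _ ≤ _ := Real.sum_mul_le_sqrt_mul_sqrt _ _ _

end Orthonormal

theorem zero_distance_lower_bound_general
    (μ : Measure ℂ) [IsProbabilityMeasure μ]
    (hcirc : ∀ᵐ z ∂μ, ‖z‖ = 1)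
    (φ : ℕ → Polynomial ℂ)
    (hφdeg : ∀ j, (φ j).natDegree = j)
    (hφon : ∀ i j, ∫ z, (φ i).eval z * (starRingEnd ℂ) ((φ j).eval z) ∂μ
      = if i = j then 1 else 0)
    (lam : ℂ)
    (n : ℕ)
    (τ : ℂ)
    (hτ : (1 - (starRingEnd ℂ) lam * τ)
        * ∑ j ∈ Finset.range n, (φ j).eval τ * (starRingEnd ℂ) ((φ j).eval lam) = 0)
    (z₀ : ℂ) :
    Metric.infDist τ (msupport μ)
        * ‖(1 - (starRingEnd ℂ) lam * z₀)
            * ∑ j ∈ Finset.range n, (φ j).eval z₀ * (starRingEnd ℂ) ((φ j).eval lam)‖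
        / (Real.sqrt (∑ j ∈ Finset.range n, ‖(φ j).eval z₀‖ ^ 2)
            * Real.sqrt (∫ z, ‖(1 - (starRingEnd ℂ) lam * z)
                * ∑ j ∈ Finset.range n, (φ j).eval z * (starRingEnd ℂ) ((φ j).eval lam)‖ ^ 2 ∂μ))
      ≤ ‖z₀ - τ‖ := by
  set h : ℂ[X] := (1 - C (conj lam) * X) * ∑ j ∈ Finset.range n, φ j * C (conj ((φ j).eval lam))
  have heval : ∀ z, h.eval z = (1 - conj lam * z)
      * ∑ j ∈ Finset.range n, (φ j).eval z * conj ((φ j).eval lam) := fun z => by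
    simp [h, eval_finsetSum]
  simp_rw [← heval]
  obtain ⟨g, hg⟩ : X - C τ ∣ h := dvd_iff_isRoot.mpr (by rwa [IsRoot, heval])
  have hgeval : ∀ z, h.eval z = (z - τ) * g.eval z := fun z => by simp [hg]
  have hgdeg : g.degree < n :=
    degree_lt_of_X_sub_C_mul_eq hg.symm (by compute_degree) (degree_sum_mul_C_lt hφdeg _ n)
  have hkernel := norm_eval_le_sqrt_mul_sqrt_integral hcirc hφon hφdeg hgdeg z₀
  have hsupp := infDist_msupport_mul_sqrt_integral_le μ τ g.eval
    (integrable_of_ae_norm_eq_one hcirc (by fun_prop))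
  simp_rw [← hgeval] at hsupp
  refine div_le_of_le_mul₀ (by positivity) (norm_nonneg _) ?_
  rw [hgeval, norm_mul]
  have hT := Metric.infDist_nonneg (x := τ) (s := msupport μ)
  have hA := Real.sqrt_nonneg (∑ j ∈ Finset.range n, ‖(φ j).eval z₀‖ ^ 2)
  nlinarith [mul_le_mul_of_nonneg_left hkernel (mul_nonneg hT (norm_nonneg (z₀ - τ))),
    mul_le_mul_of_nonneg_left hsupp (mul_nonneg (norm_nonneg (z₀ - τ)) hA)]

/-- Lemma 2: if `τ` is a zero of `h_n` with `τ ≠ lam` and `T = dist(τ, supp μ)`, then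
`|z₀ - τ| ≥ T |h_n(z₀)| / (K_{n-1}(z₀,z₀)^{1/2} ‖h_n‖_{L²(dμ)})`, where
`h_n(z) = (1 - conj(lam) z) K_{n-1}(z, lam)`. -/
theorem zero_distance_lower_bound
    (μ : Measure ℂ) [IsProbabilityMeasure μ]
    (hcirc : ∀ᵐ z ∂μ, ‖z‖ = 1)
    (hinf : (msupport μ).Infinite)
    (φ : ℕ → Polynomial ℂ)
    (hφdeg : ∀ j, (φ j).natDegree = j)
    (hφon : ∀ i j, ∫ z, (φ i).eval z * (starRingEnd ℂ) ((φ j).eval z) ∂μ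
      = if i = j then 1 else 0)
    (lam : ℂ) (hlam : ‖lam‖ = 1)
    (n : ℕ) (hn : 1 ≤ n)
    (τ : ℂ) (hτlam : τ ≠ lam)
    (hτ : (1 - (starRingEnd ℂ) lam * τ)
        * ∑ j ∈ Finset.range n, (φ j).eval τ * (starRingEnd ℂ) ((φ j).eval lam) = 0)
    (z₀ : ℂ) :
    Metric.infDist τ (msupport μ)
        * ‖(1 - (starRingEnd ℂ) lam * z₀)
            * ∑ j ∈ Finset.range n, (φ j).eval z₀ * (starRingEnd ℂ) ((φ j).eval lam)‖
        / (Real.sqrt (∑ j ∈ Finset.range n, ‖(φ j).eval z₀‖ ^ 2)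
            * Real.sqrt (∫ z, ‖(1 - (starRingEnd ℂ) lam * z)
                * ∑ j ∈ Finset.range n, (φ j).eval z * (starRingEnd ℂ) ((φ j).eval lam)‖ ^ 2 ∂μ))
      ≤ ‖z₀ - τ‖ :=
  zero_distance_lower_bound_general μ hcirc φ hφdeg hφon lam n τ hτ z₀
end

section
/- On the unit circle, define σ_{n+1}(e^{iθ}) = s_{n+1}(e^{iθ})/(conj(λ)e^{iθ})^{(n+1)/2} and η_{n+1}(e^{iθ}) = h_{n+1}(e^{iθ})/(i(conj(λ)e^{iθ})^{(n+1)/2}). Then at every zero ζ = e^{iθ} of η_{n+1}, (d/dθ)η_{n+1}(e^{iθ}) · σ_{n+1}(e^{iθ}) = −2K_n(ζ, ζ)·|φ_n(λ)/φ_n(ζ)|² < 0. -/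
open MeasureTheory Polynomial

/-!
Write `z = λe^{iθ}`, `a = φ_{n+1}(z)`, `A = φ_{n+1}(λ)` and `c = e^{i(n+1)θ}`. At a zero of `h`
one has `conj(A)·a = c·A·conj(a)`, which turns `s` into `2cA/a` (by `conj(ψ)φ + conj(φ)ψ = 2`)
and `(1/i) dh/dθ` into `-(cA/a)·K_n(z,z)` (by the diagonal Christoffel–Darboux identity
`K_n(z,z) = 2 Re(z φ'_{n+1}(z) conj(a)) - (n+1)|a|²`); as `(cA/a)²/c = |A/a|²`, again by the
zero condition, the product is `-2 K_n(z,z) |A/a|²`. Both identities are invariants of the Szegő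
transfer recursion `(φ_j, φ_j^*) ↦ (φ_{j+1}, φ_{j+1}^*)` on the unit circle. Finally the zero
condition says that `φ_{n+1}^*/φ_{n+1}` takes the same value at `z` and `λ`; the transfer matrix
has determinant `z(1 - |α_n|²) ≠ 0`, so this descends to level `n` and gives
`|φ_{n+1}(λ)/φ_{n+1}(z)| = |φ_n(λ)/φ_n(z)|`.
-/

open ComplexConjugate

theorem Complex.mul_conj_eq_one_of_norm_eq_one {z : ℂ} (hz : ‖z‖ = 1) : z * conj z = 1 := by
  rw [Complex.mul_conj', hz, Complex.ofReal_one, one_pow]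

namespace Polynomial

theorem coeff_X_mul_derivative {R : Type*} [Semiring R] (p : R[X]) (k : ℕ) :
    (X * derivative p).coeff k = p.coeff k * k := by
  cases k with
  | zero => simp
  | succ k => simp [coeff_X_mul, coeff_derivative]

theorem natDegree_X_mul_derivative_le {R : Type*} [Semiring R] (p : R[X]) :
    (X * derivative p).natDegree ≤ p.natDegree :=
  natDegree_le_iff_coeff_eq_zero.2 fun k hk => by
    rw [coeff_X_mul_derivative, coeff_eq_zero_of_natDegree_lt hk, zero_mul]

theorem X_mul_derivative_reflect {R : Type*} [CommRing R] {N : ℕ} {f : R[X]}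
    (hf : f.natDegree ≤ N) :
    X * derivative (reflect N f) = C (N : R) * reflect N f - reflect N (X * derivative f) := by
  ext k
  rw [coeff_sub, coeff_C_mul, coeff_X_mul_derivative, coeff_reflect, coeff_reflect,
    coeff_X_mul_derivative]
  rcases le_or_gt k N with hk | hk
  · rw [revAt_le hk, Nat.cast_sub hk]
    ring
  · rw [revAt_eq_self_of_lt hk, coeff_eq_zero_of_natDegree_lt (hf.trans_lt hk)]
    ring

/-- The reversed polynomial `p^*(z) = z^N \overline{p(1/\bar z)}` of Szegő theory. -/
noncomputable def conjReflect (N : ℕ) (p : ℂ[X]) : ℂ[X] := reflect N (p.map (starRingEnd ℂ))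

theorem conjReflect_sub (N : ℕ) (p q : ℂ[X]) :
    conjReflect N (p - q) = conjReflect N p - conjReflect N q := by
  simp [conjReflect, Polynomial.map_sub, reflect_sub]

theorem conjReflect_C_mul (N : ℕ) (c : ℂ) (p : ℂ[X]) :
    conjReflect N (C c * p) = C (conj c) * conjReflect N p := by
  simp [conjReflect, Polynomial.map_mul, reflect_C_mul]

theorem conjReflect_X_mul {N : ℕ} {p : ℂ[X]} (hp : p.natDegree ≤ N) :
    conjReflect (N + 1) (X * p) = conjReflect N p := by
  have := reflect_mul X (p.map (starRingEnd ℂ)) natDegree_X_le (natDegree_map_le.trans hp)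
  rw [add_comm] at this
  simpa [conjReflect] using this

theorem conjReflect_succ_conjReflect {N : ℕ} {p : ℂ[X]} (hp : p.natDegree ≤ N) :
    conjReflect (N + 1) (conjReflect N p) = X * p := by
  have hX : reflect (N + 1) (X * p) = reflect N p := by
    simpa [add_comm] using reflect_mul X p natDegree_X_le hp
  simp [conjReflect, reflect_map, Polynomial.map_map, ← hX]

theorem eval_conjReflect {N : ℕ} {p : ℂ[X]} (hp : p.natDegree ≤ N) {z : ℂ} (hz : ‖z‖ = 1) :
    (conjReflect N p).eval z = z ^ N * conj (p.eval z) := by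
  have hzz := Complex.mul_conj_eq_one_of_norm_eq_one hz
  let _ : Invertible (conj z) := ⟨z, hzz, by rw [mul_comm, hzz]⟩
  have h : eval₂ (starRingEnd ℂ) z (reflect N p) * conj z ^ N = conj (p.eval z) := by
    rw [← eval₂_hom]
    exact eval₂_reflect_mul_pow (starRingEnd ℂ) (conj z) N p hp
  rw [conjReflect, reflect_map, eval_map, ← h]
  linear_combination (-eval₂ (starRingEnd ℂ) z (reflect N p)) * (pow_mul_pow_eq_one N hzz)

theorem X_mul_derivative_conjReflect {N : ℕ} {p : ℂ[X]} (hp : p.natDegree ≤ N) :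
    X * derivative (conjReflect N p)
      = C (N : ℂ) * conjReflect N p - conjReflect N (X * derivative p) := by
  simpa [conjReflect, derivative_map, Polynomial.map_mul] using
    X_mul_derivative_reflect (natDegree_map_le.trans hp : (p.map (starRingEnd ℂ)).natDegree ≤ N)

theorem eval_derivative_conjReflect {N : ℕ} {p : ℂ[X]} (hp : p.natDegree ≤ N) {z : ℂ}
    (hz : ‖z‖ = 1) :
    z * (derivative (conjReflect N p)).eval z
      = z ^ N * (N * conj (p.eval z) - conj (z * (derivative p).eval z)) := by
  have h := congrArg (eval z) (X_mul_derivative_conjReflect hp)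
  rw [eval_mul, eval_X, eval_sub, eval_mul, eval_C, eval_conjReflect hp hz,
    eval_conjReflect ((natDegree_X_mul_derivative_le p).trans hp) hz, eval_mul, eval_X] at h
  rw [h]
  ring

end Polynomial

noncomputable def szegoRho (α : ℕ → ℂ) (j : ℕ) : ℝ := √(1 - ‖α j‖ ^ 2)

section SzegoRho

variable {α : ℕ → ℂ} {j : ℕ}

theorem szegoRho_ne_zero (h : ‖α j‖ < 1) : (szegoRho α j : ℂ) ≠ 0 := by
  have : ‖α j‖ ^ 2 < 1 := by nlinarith [norm_nonneg (α j)]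
  exact Complex.ofReal_ne_zero.2 (Real.sqrt_pos.2 (by linarith)).ne'

theorem szegoRho_mul_self (h : ‖α j‖ ≤ 1) :
    (szegoRho α j : ℂ) * szegoRho α j = 1 - α j * conj (α j) := by
  have : ‖α j‖ ^ 2 ≤ 1 := by nlinarith [norm_nonneg (α j)]
  rw [← Complex.ofReal_mul, szegoRho, Real.mul_self_sqrt (by linarith), Complex.mul_conj']
  push_cast
  ring

theorem szegoRho_neg : szegoRho (-α) = szegoRho α := by
  ext j
  simp [szegoRho]

end SzegoRho

section TransferRecursion

variable {α : ℕ → ℂ} {z : ℂ} {a F : ℕ → ℂ}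

theorem szegoTransfer_mixed_invariant {b E : ℕ → ℂ} (hα : ∀ j, ‖α j‖ < 1) (hz : z * conj z = 1)
    (ha : ∀ j, (szegoRho α j : ℂ) * a (j + 1) = z * a j - conj (α j) * F j)
    (hF : ∀ j, (szegoRho α j : ℂ) * F (j + 1) = F j - α j * (z * a j))
    (hb : ∀ j, (szegoRho α j : ℂ) * b (j + 1) = z * b j + conj (α j) * E j)
    (hE : ∀ j, (szegoRho α j : ℂ) * E (j + 1) = E j + α j * (z * b j)) (j : ℕ) :
    F j * conj (E j) + a j * conj (b j) = F 0 * conj (E 0) + a 0 * conj (b 0) := by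
  induction j with
  | zero => rfl
  | succ j ih =>
    set ρ : ℂ := (szegoRho α j : ℂ)
    have hρ : conj ρ = ρ := Complex.conj_ofReal _
    have hb' : ρ * conj (b (j + 1)) = conj z * conj (b j) + α j * conj (E j) := by
      simpa [hρ] using congrArg conj (hb j)
    have hE' : ρ * conj (E (j + 1)) = conj (E j) + conj (α j) * (conj z * conj (b j)) := by
      simpa [hρ] using congrArg conj (hE j)
    refine mul_left_cancel₀ (mul_ne_zero (szegoRho_ne_zero (hα j)) (szegoRho_ne_zero (hα j))) ?_
    linear_combination (ρ * conj (E (j + 1))) * hF j + (F j - α j * (z * a j)) * hE'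
      + (ρ * conj (b (j + 1))) * ha j + (z * a j - conj (α j) * F j) * hb'
      + (1 - α j * conj (α j)) * ih
      + (a j * conj (b j) - α j * conj (α j) * a j * conj (b j)) * hz
      - (F 0 * conj (E 0) + a 0 * conj (b 0)) * szegoRho_mul_self (hα j).le

theorem szegoTransfer_derivative_invariant {a' F' : ℕ → ℂ} (hα : ∀ j, ‖α j‖ < 1)
    (hz : z * conj z = 1)
    (ha : ∀ j, (szegoRho α j : ℂ) * a (j + 1) = z * a j - conj (α j) * F j)
    (hF : ∀ j, (szegoRho α j : ℂ) * F (j + 1) = F j - α j * (z * a j))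
    (ha' : ∀ j, (szegoRho α j : ℂ) * a' (j + 1) = a j + z * a' j - conj (α j) * F' j)
    (hF' : ∀ j, (szegoRho α j : ℂ) * F' (j + 1) = F' j - α j * (a j + z * a' j)) (j : ℕ) :
    F j * conj (F' j) - a j * conj (a' j)
      = F 0 * conj (F' 0) - a 0 * conj (a' 0) - z * ∑ i ∈ Finset.range j, a i * conj (a i) := by
  induction j with
  | zero => simp
  | succ j ih =>
    set ρ : ℂ := (szegoRho α j : ℂ)
    have hρ : conj ρ = ρ := Complex.conj_ofReal _
    have ha'c :
        ρ * conj (a' (j + 1)) = conj (a j) + conj z * conj (a' j) - α j * conj (F' j) := by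
      simpa [hρ] using congrArg conj (ha' j)
    have hF'c :
        ρ * conj (F' (j + 1)) = conj (F' j) - conj (α j) * (conj (a j) + conj z * conj (a' j)) := by
      simpa [hρ] using congrArg conj (hF' j)
    rw [Finset.sum_range_succ]
    refine mul_left_cancel₀ (mul_ne_zero (szegoRho_ne_zero (hα j)) (szegoRho_ne_zero (hα j))) ?_
    linear_combination (ρ * conj (F' (j + 1))) * hF j + (F j - α j * (z * a j)) * hF'c
      - (ρ * conj (a' (j + 1))) * ha j + (conj (α j) * F j - z * a j) * ha'c
      + (1 - α j * conj (α j)) * ih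
      + (α j * conj (α j) * a j * conj (a' j) - a j * conj (a' j)) * hz
      + ((∑ i ∈ Finset.range j, a i * conj (a i)) * z + a j * conj (a j) * z
        - (F 0 * conj (F' 0) - a 0 * conj (a' 0))) * szegoRho_mul_self (hα j).le

end TransferRecursion

structure IsSzegoSequence (α : ℕ → ℂ) (φ : ℕ → ℂ[X]) : Prop where
  norm_lt_one : ∀ j, ‖α j‖ < 1
  zero : φ 0 = 1
  natDegree_le : ∀ j, (φ j).natDegree ≤ j
  succ : ∀ j, C (szegoRho α j : ℂ) * φ (j + 1) = X * φ j - C (conj (α j)) * conjReflect j (φ j)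

noncomputable def christoffelKernel (φ : ℕ → ℂ[X]) (n : ℕ) (z y : ℂ) : ℂ :=
  ∑ j ∈ Finset.range (n + 1), (φ j).eval z * conj ((φ j).eval y)

theorem christoffelKernel_self_eq_sum (φ : ℕ → ℂ[X]) (n : ℕ) (z : ℂ) :
    christoffelKernel φ n z z = ((∑ j ∈ Finset.range (n + 1), ‖(φ j).eval z‖ ^ 2 : ℝ) : ℂ) := by
  simp [christoffelKernel, Complex.mul_conj']

namespace IsSzegoSequence

variable {α : ℕ → ℂ} {φ : ℕ → ℂ[X]} (hφ : IsSzegoSequence α φ)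
include hφ

theorem conjReflect_succ (j : ℕ) :
    C (szegoRho α j : ℂ) * conjReflect (j + 1) (φ (j + 1))
      = conjReflect j (φ j) - C (α j) * (X * φ j) := by
  have h := congrArg (conjReflect (j + 1)) (hφ.succ j)
  rwa [conjReflect_C_mul, Complex.conj_ofReal, conjReflect_sub,
    conjReflect_X_mul (hφ.natDegree_le j), conjReflect_C_mul, Complex.conj_conj,
    conjReflect_succ_conjReflect (hφ.natDegree_le j)] at h

theorem eval_succ (j : ℕ) (w : ℂ) :
    (szegoRho α j : ℂ) * (φ (j + 1)).eval w
      = w * (φ j).eval w - conj (α j) * (conjReflect j (φ j)).eval w := by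
  simpa using congrArg (eval w) (hφ.succ j)

theorem eval_conjReflect_succ (j : ℕ) (w : ℂ) :
    (szegoRho α j : ℂ) * (conjReflect (j + 1) (φ (j + 1))).eval w
      = (conjReflect j (φ j)).eval w - α j * (w * (φ j).eval w) := by
  simpa using congrArg (eval w) (hφ.conjReflect_succ j)

theorem eval_derivative_succ (j : ℕ) (w : ℂ) :
    (szegoRho α j : ℂ) * (derivative (φ (j + 1))).eval w
      = (φ j).eval w + w * (derivative (φ j)).eval w
        - conj (α j) * (derivative (conjReflect j (φ j))).eval w := by
  simpa using congrArg (fun p => (derivative p).eval w) (hφ.succ j)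

theorem eval_derivative_conjReflect_succ (j : ℕ) (w : ℂ) :
    (szegoRho α j : ℂ) * (derivative (conjReflect (j + 1) (φ (j + 1)))).eval w
      = (derivative (conjReflect j (φ j))).eval w
        - α j * ((φ j).eval w + w * (derivative (φ j)).eval w) := by
  simpa using congrArg (fun p => (derivative p).eval w) (hφ.conjReflect_succ j)

theorem eval_ne_zero {z : ℂ} (hz : ‖z‖ = 1) (j : ℕ) : (φ j).eval z ≠ 0 := by
  induction j with
  | zero => simp [hφ.zero]
  | succ j ih =>
    intro h0
    have h := hφ.eval_succ j z
    rw [h0, mul_zero, eval_conjReflect (hφ.natDegree_le j) hz] at h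
    have hn : ‖(φ j).eval z‖ = ‖α j‖ * ‖(φ j).eval z‖ := by
      simpa [hz] using congrArg norm (sub_eq_zero.1 h.symm)
    nlinarith [hφ.norm_lt_one j, norm_pos_iff.2 ih]

theorem sum_norm_sq_eval_pos (z : ℂ) (n : ℕ) :
    0 < ∑ j ∈ Finset.range (n + 1), ‖(φ j).eval z‖ ^ 2 :=
  Finset.sum_pos' (fun _ _ => sq_nonneg _) ⟨0, by simp, by simp [hφ.zero]⟩

theorem conj_eval_mul_eval_add {ψ : ℕ → ℂ[X]} (hψ : IsSzegoSequence (-α) ψ) {z : ℂ}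
    (hz : ‖z‖ = 1) (j : ℕ) :
    conj ((ψ j).eval z) * (φ j).eval z + conj ((φ j).eval z) * (ψ j).eval z = 2 := by
  have hb (j : ℕ) := hψ.eval_succ j z
  have hE (j : ℕ) := hψ.eval_conjReflect_succ j z
  simp only [szegoRho_neg, Pi.neg_apply, map_neg, neg_mul, sub_neg_eq_add] at hb hE
  have h := szegoTransfer_mixed_invariant (a := fun j => (φ j).eval z)
    (F := fun j => (conjReflect j (φ j)).eval z) (b := fun j => (ψ j).eval z)
    (E := fun j => (conjReflect j (ψ j)).eval z) hφ.norm_lt_one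
    (Complex.mul_conj_eq_one_of_norm_eq_one hz) (hφ.eval_succ · z) (hφ.eval_conjReflect_succ · z)
    hb hE j
  have h0 : (conjReflect 0 (φ 0)).eval z * conj ((conjReflect 0 (ψ 0)).eval z)
      + (φ 0).eval z * conj ((ψ 0).eval z) = 2 := by
    norm_num [hφ.zero, hψ.zero, conjReflect]
  rw [h0, eval_conjReflect (hφ.natDegree_le j) hz, eval_conjReflect (hψ.natDegree_le j) hz,
    map_mul, map_pow, Complex.conj_conj] at h
  linear_combination h - conj ((φ j).eval z) * (ψ j).eval z
    * pow_mul_pow_eq_one j (Complex.mul_conj_eq_one_of_norm_eq_one hz)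

theorem christoffelKernel_self {z : ℂ} (hz : ‖z‖ = 1) (n : ℕ) :
    christoffelKernel φ n z z
      = z * conj ((φ (n + 1)).eval z) * (derivative (φ (n + 1))).eval z
        + conj z * (φ (n + 1)).eval z * conj ((derivative (φ (n + 1))).eval z)
        - (n + 1) * (φ (n + 1)).eval z * conj ((φ (n + 1)).eval z) := by
  have h := szegoTransfer_derivative_invariant (a := fun j => (φ j).eval z)
    (F := fun j => (conjReflect j (φ j)).eval z) (a' := fun j => (derivative (φ j)).eval z)
    (F' := fun j => (derivative (conjReflect j (φ j))).eval z)
    hφ.norm_lt_one (Complex.mul_conj_eq_one_of_norm_eq_one hz)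
    (hφ.eval_succ · z) (hφ.eval_conjReflect_succ · z) (hφ.eval_derivative_succ · z)
    (hφ.eval_derivative_conjReflect_succ · z) (n + 1)
  have hF' := eval_derivative_conjReflect (hφ.natDegree_le (n + 1)) hz
  have h0 : (conjReflect 0 (φ 0)).eval z * conj ((derivative (conjReflect 0 (φ 0))).eval z)
      - (φ 0).eval z * conj ((derivative (φ 0)).eval z) = 0 := by
    simp [hφ.zero, conjReflect]
  rw [h0, eval_conjReflect (hφ.natDegree_le (n + 1)) hz] at h
  have hc := congrArg conj hF'
  simp only [map_mul, map_pow, map_sub, map_natCast, Complex.conj_conj] at hc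
  push_cast at hc
  have hzz := Complex.mul_conj_eq_one_of_norm_eq_one hz
  rw [christoffelKernel]
  linear_combination conj z * h - z ^ (n + 1) * conj ((φ (n + 1)).eval z) * hc
    - (∑ i ∈ Finset.range (n + 1), (φ i).eval z * conj ((φ i).eval z)) * hzz
    - ((n + 1) * (φ (n + 1)).eval z * conj ((φ (n + 1)).eval z)
      - z * conj ((φ (n + 1)).eval z) * (derivative (φ (n + 1))).eval z)
      * pow_mul_pow_eq_one (n + 1) hzz

theorem eval_succ_mul_eq_of_conjReflect_mul_eq {w v : ℂ} {n : ℕ}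
    (h : (conjReflect (n + 1) (φ (n + 1))).eval w * (φ (n + 1)).eval v
      = (conjReflect (n + 1) (φ (n + 1))).eval v * (φ (n + 1)).eval w) :
    (φ (n + 1)).eval w * (v * (φ n).eval v) = w * (φ n).eval w * (φ (n + 1)).eval v := by
  have hρ := szegoRho_ne_zero (hφ.norm_lt_one n)
  have hα : 1 - α n * conj (α n) ≠ 0 := by
    rw [← szegoRho_mul_self (hφ.norm_lt_one n).le]; exact mul_ne_zero hρ hρ
  have hdet : v * (φ n).eval v * (conjReflect n (φ n)).eval w
      = w * (φ n).eval w * (conjReflect n (φ n)).eval v := by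
    refine mul_left_cancel₀ hα ?_
    linear_combination -((szegoRho α n : ℂ) * (φ (n + 1)).eval v) * hφ.eval_conjReflect_succ n w
      - ((conjReflect n (φ n)).eval w - α n * (w * (φ n).eval w)) * hφ.eval_succ n v
      + ((szegoRho α n : ℂ) * (φ (n + 1)).eval w) * hφ.eval_conjReflect_succ n v
      + ((conjReflect n (φ n)).eval v - α n * (v * (φ n).eval v)) * hφ.eval_succ n w
      + (szegoRho α n : ℂ) ^ 2 * h
  refine mul_left_cancel₀ hρ ?_
  linear_combination (v * (φ n).eval v) * hφ.eval_succ n w - w * (φ n).eval w * hφ.eval_succ n v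
    - conj (α n) * hdet

end IsSzegoSequence

theorem HasDerivAt.div_of_eq_zero {𝕜 𝕜' : Type*} [NontriviallyNormedField 𝕜]
    [NontriviallyNormedField 𝕜'] [NormedAlgebra 𝕜 𝕜'] {c d : 𝕜 → 𝕜'} {c' d' : 𝕜'} {x : 𝕜}
    (hc : HasDerivAt c c' x) (hd : HasDerivAt d d' x) (hdx : d x ≠ 0) (hcx : c x = 0) :
    HasDerivAt (fun y => c y / d y) (c' / d x) x := by
  convert hc.fun_div hd hdx using 1
  rw [hcx]
  field_simp
  ring

open Complex in
theorem hasDerivAt_mul_exp_mul_I (lam : ℂ) (θ : ℝ) :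
    HasDerivAt (fun θ : ℝ => lam * exp (θ * I)) (lam * exp (θ * I) * I) θ := by
  have := (((hasDerivAt_id θ).ofReal_comp).mul_const I).cexp.const_mul lam
  simpa [mul_assoc] using this

/-- `h_{n+1}` of the paper, with `p = φ_{n+1}` and `N = n + 1`. -/
noncomputable def szegoH (p : ℂ[X]) (lam : ℂ) (N : ℕ) (z : ℂ) : ℂ :=
  conj (lam ^ N) * z ^ N * p.eval lam * conj (p.eval z) - conj (p.eval lam) * p.eval z

/-- `s_{n+1}` of the paper, with `p = φ_{n+1}`, `q = ψ_{n+1}` and `N = n + 1`. -/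
noncomputable def szegoS (p q : ℂ[X]) (lam : ℂ) (N : ℕ) (z : ℂ) : ℂ :=
  conj (lam ^ N) * z ^ N * p.eval lam * conj (q.eval z) + conj (p.eval lam) * q.eval z

/-- `(d/dθ) h(λ e^{iθ}) = i · szegoHDeriv p λ N (λ e^{iθ})`. -/
noncomputable def szegoHDeriv (p : ℂ[X]) (lam : ℂ) (N : ℕ) (z : ℂ) : ℂ :=
  N * (conj (lam ^ N) * z ^ N) * p.eval lam * conj (p.eval z)
    - conj (lam ^ N) * z ^ N * p.eval lam * conj z * conj ((derivative p).eval z)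
    - conj (p.eval lam) * z * (derivative p).eval z

open Complex in
theorem hasDerivAt_szegoH (p : ℂ[X]) (lam : ℂ) (N : ℕ) (θ : ℝ) :
    HasDerivAt (fun θ : ℝ => szegoH p lam N (lam * exp (θ * I)))
      (I * szegoHDeriv p lam N (lam * exp (θ * I))) θ := by
  have hg := hasDerivAt_mul_exp_mul_I lam θ
  set z := lam * exp (θ * I)
  have hp := (p.hasDerivAt z).comp θ hg
  have h := ((((hg.pow N).const_mul (conj (lam ^ N))).mul_const (p.eval lam)).mul hp.star).sub
    (hp.const_mul (conj (p.eval lam)))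
  refine (show HasDerivAt (fun θ : ℝ => szegoH p lam N (lam * exp (θ * I))) _ θ from h).congr_deriv
    ?_
  simp only [szegoHDeriv, Function.comp_apply, Pi.pow_apply, Complex.star_def, map_mul, conj_I]
  cases N with
  | zero =>
    simp only [CharP.cast_eq_zero, zero_mul, pow_zero, map_one, one_mul, zero_add, mul_one]
    ring
  | succ m =>
    push_cast
    ring

section SzegoH

variable {p q : ℂ[X]} {lam z : ℂ} {N : ℕ}

theorem szegoS_mul_eval_of_szegoH_eq_zero (hh : szegoH p lam N z = 0)
    (h2 : conj (q.eval z) * p.eval z + conj (p.eval z) * q.eval z = 2) :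
    szegoS p q lam N z * p.eval z = 2 * (conj (lam ^ N) * z ^ N * p.eval lam) := by
  unfold szegoH at hh
  unfold szegoS
  linear_combination (-q.eval z) * hh + (conj (lam ^ N) * z ^ N * p.eval lam) * h2

theorem szegoHDeriv_mul_eval_of_szegoH_eq_zero (hh : szegoH p lam N z = 0) :
    szegoHDeriv p lam N z * p.eval z
      = -(conj (lam ^ N) * z ^ N * p.eval lam)
        * (z * conj (p.eval z) * (derivative p).eval z
          + conj z * p.eval z * conj ((derivative p).eval z) - N * p.eval z * conj (p.eval z)) := by
  unfold szegoH at hh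
  unfold szegoHDeriv
  linear_combination (z * (derivative p).eval z) * hh

end SzegoH

namespace IsSzegoSequence

variable {α : ℕ → ℂ} {φ : ℕ → ℂ[X]} (hφ : IsSzegoSequence α φ)
include hφ

theorem conjReflect_mul_eq_of_szegoH_eq_zero {lam z : ℂ} (hlam : ‖lam‖ = 1) (hz : ‖z‖ = 1)
    {N : ℕ} (hh : szegoH (φ N) lam N z = 0) :
    (conjReflect N (φ N)).eval z * (φ N).eval lam
      = (conjReflect N (φ N)).eval lam * (φ N).eval z := by
  rw [eval_conjReflect (hφ.natDegree_le N) hz, eval_conjReflect (hφ.natDegree_le N) hlam]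
  unfold szegoH at hh
  rw [map_pow] at hh
  linear_combination lam ^ N * hh - (z ^ N * conj ((φ N).eval z) * (φ N).eval lam)
    * pow_mul_pow_eq_one N (Complex.mul_conj_eq_one_of_norm_eq_one hlam)

theorem norm_eval_div_eval_succ {w v : ℂ} (hw : ‖w‖ = 1) (hv : ‖v‖ = 1) {n : ℕ}
    (h : (conjReflect (n + 1) (φ (n + 1))).eval w * (φ (n + 1)).eval v
      = (conjReflect (n + 1) (φ (n + 1))).eval v * (φ (n + 1)).eval w) :
    ‖(φ (n + 1)).eval v / (φ (n + 1)).eval w‖ = ‖(φ n).eval v / (φ n).eval w‖ := by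
  have hn := congrArg norm (hφ.eval_succ_mul_eq_of_conjReflect_mul_eq h)
  simp only [norm_mul, hw, hv, one_mul] at hn
  rw [norm_div, norm_div, div_eq_div_iff (norm_ne_zero_iff.2 (hφ.eval_ne_zero hw _))
    (norm_ne_zero_iff.2 (hφ.eval_ne_zero hw _))]
  linarith

theorem szegoHDeriv_mul_szegoS {ψ : ℕ → ℂ[X]} (hψ : IsSzegoSequence (-α) ψ) {lam z : ℂ}
    (hlam : ‖lam‖ = 1) (hz : ‖z‖ = 1) {n : ℕ} (hh : szegoH (φ (n + 1)) lam (n + 1) z = 0) :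
    szegoHDeriv (φ (n + 1)) lam (n + 1) z * szegoS (φ (n + 1)) (ψ (n + 1)) lam (n + 1) z
      = conj (lam ^ (n + 1)) * z ^ (n + 1)
        * (-2 * christoffelKernel φ n z z * (‖(φ n).eval lam / (φ n).eval z‖ ^ 2 : ℝ)) := by
  have hD := szegoHDeriv_mul_eval_of_szegoH_eq_zero hh
  push_cast at hD
  rw [← hφ.christoffelKernel_self hz n] at hD
  have hS := szegoS_mul_eval_of_szegoH_eq_zero hh (hφ.conj_eval_mul_eval_add hψ hz (n + 1))
  have hZ := hh
  unfold szegoH at hZ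
  rw [← hφ.norm_eval_div_eval_succ hz hlam (hφ.conjReflect_mul_eq_of_szegoH_eq_zero hlam hz hh),
    Complex.ofReal_pow, ← Complex.mul_conj', map_div₀]
  set a := (φ (n + 1)).eval z
  set A := (φ (n + 1)).eval lam
  set c := conj (lam ^ (n + 1)) * z ^ (n + 1)
  set K := christoffelKernel φ n z z
  have ha : a ≠ 0 := hφ.eval_ne_zero hz _
  have key : szegoHDeriv (φ (n + 1)) lam (n + 1) z * szegoS (φ (n + 1)) (ψ (n + 1)) lam (n + 1) z
      * (a * conj a) = c * (-2 * K) * (A * conj A) := by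
    refine mul_right_cancel₀ ha ?_
    linear_combination (szegoS (φ (n + 1)) (ψ (n + 1)) lam (n + 1) z * a * conj a) * hD
      - (c * A * K * conj a) * hS - 2 * K * c * A * hZ
  rw [div_mul_div_comm, ← mul_div_assoc, ← mul_div_assoc,
    eq_div_iff (mul_ne_zero ha ((_root_.map_ne_zero _).2 ha))]
  linear_combination key

end IsSzegoSequence

open Complex in
theorem exp_half_mul_self_eq_conj_pow_mul_pow {lam : ℂ} (hlam : ‖lam‖ = 1) (θ : ℝ) (n : ℕ) :
    exp (θ * I * (((n : ℝ) + 1) / 2)) * exp (θ * I * (((n : ℝ) + 1) / 2))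
      = conj (lam ^ (n + 1)) * (lam * exp (θ * I)) ^ (n + 1) := by
  rw [← exp_add, mul_pow, ← mul_assoc, map_pow, ← mul_pow, mul_comm (conj lam),
    Complex.mul_conj_eq_one_of_norm_eq_one hlam, one_pow, one_mul, ← exp_nat_mul]
  congr 1
  push_cast
  ring

theorem derivative_times_sigma_negative_general
    (φ ψ : ℕ → Polynomial ℂ)
    (hφdeg : ∀ j, (φ j).natDegree = j) (hψdeg : ∀ j, (ψ j).natDegree = j)
    (α : ℕ → ℂ) (hα : ∀ j, ‖(α j)‖ < 1)
    (hφ0 : φ 0 = 1) (hψ0 : ψ 0 = 1)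
    (hφrec : ∀ j, C (Real.sqrt (1 - ‖(α j)‖ ^ 2) : ℂ) * φ (j + 1)
      = X * φ j - C ((starRingEnd ℂ) (α j)) * reflect j ((φ j).map (starRingEnd ℂ)))
    (hψrec : ∀ j, C (Real.sqrt (1 - ‖(α j)‖ ^ 2) : ℂ) * ψ (j + 1)
      = X * ψ j - C ((starRingEnd ℂ) (-α j)) * reflect j ((ψ j).map (starRingEnd ℂ)))
    (lam : ℂ) (hlam : ‖lam‖ = 1)
    (n : ℕ)
    (η σ' : ℝ → ℂ)
    (hη : ∀ θ : ℝ, η θ =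
      ((starRingEnd ℂ) (lam ^ (n + 1)) * (lam * Complex.exp (θ * Complex.I)) ^ (n + 1)
          * (φ (n + 1)).eval lam
          * (starRingEnd ℂ) ((φ (n + 1)).eval (lam * Complex.exp (θ * Complex.I)))
        - (starRingEnd ℂ) ((φ (n + 1)).eval lam)
          * (φ (n + 1)).eval (lam * Complex.exp (θ * Complex.I)))
      / (Complex.I * Complex.exp (θ * Complex.I * (((n : ℝ) + 1) / 2))))
    (hσ : ∀ θ : ℝ, σ' θ =
      ((starRingEnd ℂ) (lam ^ (n + 1)) * (lam * Complex.exp (θ * Complex.I)) ^ (n + 1)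
          * (φ (n + 1)).eval lam
          * (starRingEnd ℂ) ((ψ (n + 1)).eval (lam * Complex.exp (θ * Complex.I)))
        + (starRingEnd ℂ) ((φ (n + 1)).eval lam)
          * (ψ (n + 1)).eval (lam * Complex.exp (θ * Complex.I)))
      / Complex.exp (θ * Complex.I * (((n : ℝ) + 1) / 2)))
    (θ₀ : ℝ)
    (hzero : η θ₀ = 0) :
    deriv η θ₀ * σ' θ₀
      = ((-2 * (∑ j ∈ Finset.range (n + 1),
              ‖((φ j).eval (lam * Complex.exp (θ₀ * Complex.I)))‖ ^ 2)
            * ‖((φ n).eval lam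
                / (φ n).eval (lam * Complex.exp (θ₀ * Complex.I)))‖ ^ 2 : ℝ) : ℂ) ∧
    (-2 * (∑ j ∈ Finset.range (n + 1),
        ‖((φ j).eval (lam * Complex.exp (θ₀ * Complex.I)))‖ ^ 2)
      * ‖((φ n).eval lam
          / (φ n).eval (lam * Complex.exp (θ₀ * Complex.I)))‖ ^ 2 : ℝ) < 0 := by
  open Complex in
  have hφ : IsSzegoSequence α φ := ⟨hα, hφ0, fun j => (hφdeg j).le, hφrec⟩
  have hψ : IsSzegoSequence (-α) ψ :=
    ⟨by simpa using hα, hψ0, fun j => (hψdeg j).le, fun j => by rw [szegoRho_neg]; exact hψrec j⟩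
  set z := lam * exp (θ₀ * I)
  have hz : ‖z‖ = 1 := by simp [z, hlam]
  set E := exp (θ₀ * I * (((n : ℝ) + 1) / 2))
  have hE : I * E ≠ 0 := mul_ne_zero I_ne_zero (exp_ne_zero _)
  have hh : szegoH (φ (n + 1)) lam (n + 1) z = 0 :=
    (div_eq_zero_iff.1 ((hη θ₀).symm.trans hzero)).resolve_right hE
  have hderiv : HasDerivAt η (I * szegoHDeriv (φ (n + 1)) lam (n + 1) z / (I * E)) θ₀ := by
    rw [show η = _ from funext hη]
    exact (hasDerivAt_szegoH _ _ _ θ₀).div_of_eq_zero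
      ((((hasDerivAt_id θ₀).ofReal_comp.mul_const I).mul_const _).cexp.const_mul I) hE hh
  have hσ₀ : σ' θ₀ = szegoS (φ (n + 1)) (ψ (n + 1)) lam (n + 1) z / E := hσ θ₀
  have hE2 := exp_half_mul_self_eq_conj_pow_mul_pow hlam θ₀ n
  have hq : 0 < ‖(φ n).eval lam / (φ n).eval z‖ ^ 2 :=
    pow_pos (norm_pos_iff.2 (div_ne_zero (hφ.eval_ne_zero hlam n) (hφ.eval_ne_zero hz n))) 2
  refine ⟨?_, mul_neg_of_neg_of_pos
    (mul_neg_of_neg_of_pos (by norm_num) (hφ.sum_norm_sq_eval_pos z n)) hq⟩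
  rw [hderiv.deriv, hσ₀, mul_div_mul_left _ _ I_ne_zero, div_mul_div_comm, hE2,
    hφ.szegoHDeriv_mul_szegoS hψ hlam hz hh,
    mul_div_cancel_left₀ _ (hE2 ▸ mul_ne_zero (exp_ne_zero _) (exp_ne_zero _)),
    christoffelKernel_self_eq_sum]
  push_cast
  ring

/-- At every zero `ζ = lam·e^{iθ₀}` of `η_{n+1}`, one has
`(d/dθ)η_{n+1} · σ_{n+1} = -2 K_n(ζ,ζ) |φ_n(lam)/φ_n(ζ)|² < 0`, where
`η_{n+1}(θ) = h_{n+1}(lam e^{iθ})/(i e^{iθ(n+1)/2})` and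
`σ_{n+1}(θ) = s_{n+1}(lam e^{iθ})/e^{iθ(n+1)/2}` (the branch of `(conj(lam)z)^{1/2}`
with argument in `[0,π)`, realized by `θ ∈ [0, 2π)`). -/
theorem derivative_times_sigma_negative
    (μ ν : Measure ℂ) [IsProbabilityMeasure μ] [IsProbabilityMeasure ν]
    (hμc : ∀ᵐ z ∂μ, ‖z‖ = 1) (hνc : ∀ᵐ z ∂ν, ‖z‖ = 1)
    (hμinf : (msupport μ).Infinite) (hνinf : (msupport ν).Infinite)
    (φ ψ : ℕ → Polynomial ℂ)
    (hφdeg : ∀ j, (φ j).natDegree = j) (hψdeg : ∀ j, (ψ j).natDegree = j)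
    (hφon : ∀ i j, ∫ z, (φ i).eval z * (starRingEnd ℂ) ((φ j).eval z) ∂μ
      = if i = j then 1 else 0)
    (hψon : ∀ i j, ∫ z, (ψ i).eval z * (starRingEnd ℂ) ((ψ j).eval z) ∂ν
      = if i = j then 1 else 0)
    (α : ℕ → ℂ) (hα : ∀ j, ‖(α j)‖ < 1)
    (hφ0 : φ 0 = 1) (hψ0 : ψ 0 = 1)
    (hφrec : ∀ j, C (Real.sqrt (1 - ‖(α j)‖ ^ 2) : ℂ) * φ (j + 1)
      = X * φ j - C ((starRingEnd ℂ) (α j)) * reflect j ((φ j).map (starRingEnd ℂ)))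
    (hψrec : ∀ j, C (Real.sqrt (1 - ‖(α j)‖ ^ 2) : ℂ) * ψ (j + 1)
      = X * ψ j - C ((starRingEnd ℂ) (-α j)) * reflect j ((ψ j).map (starRingEnd ℂ)))
    (lam : ℂ) (hlam : ‖lam‖ = 1)
    (n : ℕ)
    (η σ' : ℝ → ℂ)
    (hη : ∀ θ : ℝ, η θ =
      ((starRingEnd ℂ) (lam ^ (n + 1)) * (lam * Complex.exp (θ * Complex.I)) ^ (n + 1)
          * (φ (n + 1)).eval lam
          * (starRingEnd ℂ) ((φ (n + 1)).eval (lam * Complex.exp (θ * Complex.I)))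
        - (starRingEnd ℂ) ((φ (n + 1)).eval lam)
          * (φ (n + 1)).eval (lam * Complex.exp (θ * Complex.I)))
      / (Complex.I * Complex.exp (θ * Complex.I * (((n : ℝ) + 1) / 2))))
    (hσ : ∀ θ : ℝ, σ' θ =
      ((starRingEnd ℂ) (lam ^ (n + 1)) * (lam * Complex.exp (θ * Complex.I)) ^ (n + 1)
          * (φ (n + 1)).eval lam
          * (starRingEnd ℂ) ((ψ (n + 1)).eval (lam * Complex.exp (θ * Complex.I)))
        + (starRingEnd ℂ) ((φ (n + 1)).eval lam)
          * (ψ (n + 1)).eval (lam * Complex.exp (θ * Complex.I)))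
      / Complex.exp (θ * Complex.I * (((n : ℝ) + 1) / 2)))
    (θ₀ : ℝ) (hθ₀ : θ₀ ∈ Set.Ico 0 (2 * Real.pi))
    (hzero : η θ₀ = 0) :
    deriv η θ₀ * σ' θ₀
      = ((-2 * (∑ j ∈ Finset.range (n + 1),
              ‖((φ j).eval (lam * Complex.exp (θ₀ * Complex.I)))‖ ^ 2)
            * ‖((φ n).eval lam
                / (φ n).eval (lam * Complex.exp (θ₀ * Complex.I)))‖ ^ 2 : ℝ) : ℂ) ∧
    (-2 * (∑ j ∈ Finset.range (n + 1),
        ‖((φ j).eval (lam * Complex.exp (θ₀ * Complex.I)))‖ ^ 2)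
      * ‖((φ n).eval lam
          / (φ n).eval (lam * Complex.exp (θ₀ * Complex.I)))‖ ^ 2 : ℝ) < 0 :=
  derivative_times_sigma_negative_general φ ψ hφdeg hψdeg α hα hφ0 hψ0 hφrec hψrec lam hlam n η σ'
    hη hσ θ₀ hzero
end
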